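/- arXiv:1409.1462 — 5 statements merged into one kernel-verified Lean document; each statement's English description precedes it below -/
import Mathlib

section
/- For every x in the dual cone K*, one has (σ_f/2)·‖u(x) − u*‖² ≤ f* − d(x), and the primal feasibility violation satisfies dist_K(G u(x) + g) ≤ ‖G‖·‖u(x) − u*‖. -/
open scoped RealInnerProductSpace

theorem stmt_0 {n p : ℕ}
    (f : EuclideanSpace ℝ (Fin n) → ℝ) (σf : ℝ) (hσf : 0 < σf)
    (hfc : Continuous f) (hfsc : StrongConvexOn Set.univ σf f)
    (U : Set (EuclideanSpace ℝ (Fin n))) (hUne : U.Nonempty) (hUcl : IsClosed U) (hUcv : Convex ℝ U)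
    (G : EuclideanSpace ℝ (Fin n) →L[ℝ] EuclideanSpace ℝ (Fin p)) (hG : G ≠ 0) (g : EuclideanSpace ℝ (Fin p))
    (K : Set (EuclideanSpace ℝ (Fin p))) (hKne : K.Nonempty) (hKcl : IsClosed K) (hKcv : Convex ℝ K)
    (hKcone : ∀ c : ℝ, 0 ≤ c → ∀ v ∈ K, c • v ∈ K)
    (Kstar : Set (EuclideanSpace ℝ (Fin p)))
    (hKstar : Kstar = {x : EuclideanSpace ℝ (Fin p) | ∀ v ∈ K, 0 ≤ ⟪x, v⟫})
    (Lag : EuclideanSpace ℝ (Fin n) → EuclideanSpace ℝ (Fin p) → ℝ)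
    (hLag : ∀ u x, Lag u x = f u + ⟪x, -(G u) - g⟫)
    (uu : EuclideanSpace ℝ (Fin p) → EuclideanSpace ℝ (Fin n))
    (huu : ∀ x : EuclideanSpace ℝ (Fin p), uu x ∈ U ∧ ∀ u ∈ U, Lag (uu x) x ≤ Lag u x)
    (d : EuclideanSpace ℝ (Fin p) → ℝ) (hd : ∀ x, d x = Lag (uu x) x)
    (ustar : EuclideanSpace ℝ (Fin n))
    (hustar : ustar ∈ U ∧ G ustar + g ∈ K ∧ ∀ u ∈ U, G u + g ∈ K → f ustar ≤ f u)
    (fstar : ℝ) (hfstar : fstar = f ustar)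
    (Xstar : Set (EuclideanSpace ℝ (Fin p))) (hXstar : Xstar = {x ∈ Kstar | d x = fstar})
    (hXne : Xstar.Nonempty)
    (hsaddle : ∀ xs ∈ Xstar, uu xs = ustar ∧ ⟪xs, G ustar + g⟫ = 0)
 :
    ∀ x ∈ Kstar,
      σf / 2 * ‖uu x - ustar‖ ^ 2 ≤ fstar - d x ∧
      Metric.infDist (G (uu x) + g) K ≤ ‖G‖ * ‖uu x - ustar‖ := by
  intro x hx
  set A := uu x with hA
  set B := ustar with hB
  have hAU : A ∈ U := (huu x).1
  have hBU : B ∈ U := hustar.1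
  have hS : (0:ℝ) ≤ σf / 2 * ‖A - B‖ ^ 2 := by positivity
  set S := σf / 2 * ‖A - B‖ ^ 2 with hSdef
  -- key strong-convexity inequality for all t ∈ (0,1)
  have key : ∀ t : ℝ, 0 < t → t < 1 → Lag A x + (1 - t) * S ≤ Lag B x := by
    intro t ht0 ht1
    have hsc := hfsc.2 (Set.mem_univ A) (Set.mem_univ B)
      (by linarith : (0:ℝ) ≤ 1 - t) (le_of_lt ht0) (by ring)
    have hmem : (1 - t) • A + t • B ∈ U :=
      hUcv hAU hBU (by linarith) (le_of_lt ht0) (by ring)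
    have hmin := (huu x).2 _ hmem
    have hlin : ⟪x, -(G ((1 - t) • A + t • B)) - g⟫
        = (1 - t) * ⟪x, -(G A) - g⟫ + t * ⟪x, -(G B) - g⟫ := by
      have : G ((1 - t) • A + t • B) = (1 - t) • G A + t • G B := by
        simp [map_add, map_smul]
      rw [this]
      simp only [inner_sub_right, inner_neg_right, inner_add_right, real_inner_smul_right]
      ring
    have hLt : Lag ((1 - t) • A + t • B) x
        ≤ (1 - t) * Lag A x + t * Lag B x - (1 - t) * t * S := by
      rw [hLag, hLag, hLag, hlin, hSdef]
      simp only [smul_eq_mul] at hsc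
      linarith [hsc]
    have := le_trans hmin hLt
    nlinarith [this]
  have hLB : Lag B x ≤ fstar := by
    rw [hLag, hfstar]
    have hxK : ∀ v ∈ K, 0 ≤ ⟪x, v⟫ := by rw [hKstar] at hx; exact hx
    have := hxK _ hustar.2.1
    have heq : ⟪x, -(G B) - g⟫ = -⟪x, G B + g⟫ := by
      rw [← inner_neg_right]; congr 1; abel
    rw [heq]
    linarith
  have hfst : S ≤ fstar - d x := by
    rw [hd]
    refine le_of_forall_pos_le_add ?_
    intro ε hε
    have ht0 : 0 < min (1/2 : ℝ) (ε / (S + 1)) := by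
      apply lt_min (by norm_num); positivity
    have ht1 : min (1/2 : ℝ) (ε / (S + 1)) < 1 :=
      lt_of_le_of_lt (min_le_left _ _) (by norm_num)
    have hk := key _ ht0 ht1
    have htle : min (1/2 : ℝ) (ε / (S + 1)) ≤ ε / (S + 1) := min_le_right _ _
    have hdiv : ε / (S + 1) * S ≤ ε := by
      rw [div_mul_eq_mul_div, div_le_iff₀ (by linarith)]
      nlinarith
    nlinarith [mul_le_mul_of_nonneg_right htle hS, hk, hLB]
  constructor
  · exact hfst
  · have hdist : Metric.infDist (G A + g) K ≤ dist (G A + g) (G B + g) :=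
      Metric.infDist_le_dist_of_mem hustar.2.1
    have : dist (G A + g) (G B + g) = ‖G (A - B)‖ := by
      rw [dist_eq_norm]
      congr 1
      simp [map_sub]
    calc Metric.infDist (G A + g) K ≤ ‖G (A - B)‖ := by rw [← this]; exact hdist
      _ ≤ ‖G‖ * ‖A - B‖ := G.le_opNorm _
end

section
/- For every x in the dual cone K* and every optimal Lagrange multiplier x* ∈ X*, the primal suboptimality of u(x) satisfies |f(u(x)) − f*| ≤ ‖G‖·(‖x − x*‖ + ‖x*‖)·‖u(x) − u*‖. -/
open scoped RealInnerProductSpace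

theorem stmt_1 {n p : ℕ}
    (f : EuclideanSpace ℝ (Fin n) → ℝ) (σf : ℝ) (hσf : 0 < σf)
    (hfc : Continuous f) (hfsc : StrongConvexOn Set.univ σf f)
    (U : Set (EuclideanSpace ℝ (Fin n))) (hUne : U.Nonempty) (hUcl : IsClosed U) (hUcv : Convex ℝ U)
    (G : EuclideanSpace ℝ (Fin n) →L[ℝ] EuclideanSpace ℝ (Fin p)) (hG : G ≠ 0) (g : EuclideanSpace ℝ (Fin p))
    (K : Set (EuclideanSpace ℝ (Fin p))) (hKne : K.Nonempty) (hKcl : IsClosed K) (hKcv : Convex ℝ K)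
    (hKcone : ∀ c : ℝ, 0 ≤ c → ∀ v ∈ K, c • v ∈ K)
    (Kstar : Set (EuclideanSpace ℝ (Fin p)))
    (hKstar : Kstar = {x : EuclideanSpace ℝ (Fin p) | ∀ v ∈ K, 0 ≤ ⟪x, v⟫})
    (Lag : EuclideanSpace ℝ (Fin n) → EuclideanSpace ℝ (Fin p) → ℝ)
    (hLag : ∀ u x, Lag u x = f u + ⟪x, -(G u) - g⟫)
    (uu : EuclideanSpace ℝ (Fin p) → EuclideanSpace ℝ (Fin n))
    (huu : ∀ x : EuclideanSpace ℝ (Fin p), uu x ∈ U ∧ ∀ u ∈ U, Lag (uu x) x ≤ Lag u x)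
    (d : EuclideanSpace ℝ (Fin p) → ℝ) (hd : ∀ x, d x = Lag (uu x) x)
    (ustar : EuclideanSpace ℝ (Fin n))
    (hustar : ustar ∈ U ∧ G ustar + g ∈ K ∧ ∀ u ∈ U, G u + g ∈ K → f ustar ≤ f u)
    (fstar : ℝ) (hfstar : fstar = f ustar)
    (Xstar : Set (EuclideanSpace ℝ (Fin p))) (hXstar : Xstar = {x ∈ Kstar | d x = fstar})
    (hXne : Xstar.Nonempty)
    (hsaddle : ∀ xs ∈ Xstar, uu xs = ustar ∧ ⟪xs, G ustar + g⟫ = 0)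
 :
    ∀ x ∈ Kstar, ∀ xs ∈ Xstar,
      |f (uu x) - fstar| ≤ ‖G‖ * (‖x - xs‖ + ‖xs‖) * ‖uu x - ustar‖ := by
  intro x hx xs hxs
  obtain ⟨huus, hperp⟩ := hsaddle xs hxs
  have hdxs : d xs = fstar := by rw [hXstar] at hxs; exact hxs.2
  set v := uu x with hv
  have hvU : v ∈ U := (huu x).1
  have h1 : Lag v x ≤ Lag ustar x := (huu x).2 ustar hustar.1
  have h2 : Lag ustar xs ≤ Lag v xs := by
    have := (huu xs).2 v hvU
    rwa [huus] at this
  have hLs : Lag ustar xs = fstar := by rw [← hdxs, hd, huus]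
  set w : EuclideanSpace ℝ (Fin p) := G v - G ustar with hw
  have hwn : ‖w‖ ≤ ‖G‖ * ‖v - ustar‖ := by
    have : w = G (v - ustar) := by rw [hw, map_sub]
    rw [this]; exact G.le_opNorm _
  have hup : f v - fstar ≤ ⟪x, w⟫ := by
    rw [hLag, hLag] at h1
    have he : ⟪x, -(G ustar) - g⟫ - ⟪x, -(G v) - g⟫ = ⟪x, w⟫ := by
      rw [← inner_sub_right]
      congr 1
      rw [hw]
      abel
    rw [hfstar]; linarith
  have hlow : fstar - f v ≤ -⟪xs, w⟫ := by
    rw [hLag, hLag] at h2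
    have he : ⟪xs, -(G v) - g⟫ - ⟪xs, -(G ustar) - g⟫ = -⟪xs, w⟫ := by
      rw [← inner_sub_right]
      have hv2 : (-(G v) - g) - (-(G ustar) - g) = -w := by rw [hw]; abel
      rw [hv2, inner_neg_right]
    linarith
  have hsplit : ⟪x, w⟫ = ⟪x - xs, w⟫ + ⟪xs, w⟫ := by
    rw [← inner_add_left]; congr 1; abel
  have c1 : ⟪x - xs, w⟫ ≤ ‖x - xs‖ * ‖w‖ := real_inner_le_norm _ _
  have c2 : ⟪xs, w⟫ ≤ ‖xs‖ * ‖w‖ := real_inner_le_norm _ _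
  have c3 : -⟪xs, w⟫ ≤ ‖xs‖ * ‖w‖ := by
    have := real_inner_le_norm (-xs) w
    rwa [inner_neg_left, norm_neg] at this
  have hnn1 : (0:ℝ) ≤ ‖x - xs‖ := norm_nonneg _
  have hnn2 : (0:ℝ) ≤ ‖xs‖ := norm_nonneg _
  have hnn3 : (0:ℝ) ≤ ‖w‖ := norm_nonneg _
  rw [abs_le]
  constructor
  · nlinarith
  · nlinarith
end

section
/- The norm of the gradient map is nonincreasing along a gradient step: for every x ∈ K*, ‖∇⁺d(x⁺)‖ ≤ ‖∇⁺d(x)‖, where x⁺ = [x + (1/L_d) ∇d(x)]_{K*}. -/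
open scoped RealInnerProductSpace

/-!
The map `T x = [x + (1/L_d) ∇d(x)]_{K*}` is nonexpansive, and `∇⁺d(x) = T x - x`, so
`‖∇⁺d(T x)‖ = ‖T (T x) - T x‖ ≤ ‖T x - x‖ = ‖∇⁺d(x)‖`. The projection onto the convex set `K*` is
nonexpansive by its variational characterization. The gradient step is nonexpansive because
`-∇d` is cocoercive: comparing the quadratic growth of the strongly convex Lagrangians at the two
minimizers `u(y)`, `u(z)` gives `σ/2 ‖u(y) - u(z)‖² ≤ ⟪z - y, ∇d(y) - ∇d(z)⟫`, while
`‖∇d(y) - ∇d(z)‖ ≤ ‖G‖ ‖u(y) - u(z)‖`.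
-/

section NearestPoint

variable {F : Type*} [NormedAddCommGroup F] [InnerProductSpace ℝ F] {S : Set F}

theorem convex_setOf_forall_inner_nonneg (K : Set F) : Convex ℝ {x : F | ∀ v ∈ K, 0 ≤ ⟪x, v⟫} :=
  fun _ ha _ hb _ _ hs ht _ v hv => by
    rw [inner_add_left, real_inner_smul_left, real_inner_smul_left]
    exact add_nonneg (mul_nonneg hs (ha v hv)) (mul_nonneg ht (hb v hv))

theorem real_inner_sub_le_zero_of_forall_norm_sub_le (hS : Convex ℝ S) {z p : F} (hp : p ∈ S)
    (hmin : ∀ w ∈ S, ‖z - p‖ ≤ ‖z - w‖) {w : F} (hw : w ∈ S) : ⟪z - p, w - p⟫ ≤ 0 := by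
  have : Nonempty S := ⟨⟨p, hp⟩⟩
  refine (norm_eq_iInf_iff_real_inner_le_zero hS hp).1 (le_antisymm ?_ ?_) w hw
  · exact le_ciInf fun w => hmin w w.2
  · refine ciInf_le ?_ (⟨p, hp⟩ : S)
    exact ⟨0, Set.forall_mem_range.2 fun _ => norm_nonneg _⟩

theorem norm_sub_le_of_forall_norm_sub_le (hS : Convex ℝ S) {P : F → F}
    (hP : ∀ z, P z ∈ S ∧ ∀ w ∈ S, ‖z - P z‖ ≤ ‖z - w‖) (z w : F) :
    ‖P z - P w‖ ≤ ‖z - w‖ := by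
  have hz := real_inner_sub_le_zero_of_forall_norm_sub_le hS (hP z).1 (hP z).2 (hP w).1
  have hw := real_inner_sub_le_zero_of_forall_norm_sub_le hS (hP w).1 (hP w).2 (hP z).1
  have hfirm : ‖P z - P w‖ ^ 2 ≤ ⟪z - w, P z - P w⟫ := by
    have : ⟪z - w, P z - P w⟫ - ‖P z - P w‖ ^ 2
        = -⟪z - P z, P w - P z⟫ - ⟪w - P w, P z - P w⟫ := by
      rw [← real_inner_self_eq_norm_sq]
      simp only [inner_sub_left, inner_sub_right, real_inner_comm]
      ring
    linarith
  nlinarith [real_inner_le_norm (z - w) (P z - P w), norm_nonneg (P z - P w), norm_nonneg (z - w)]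

end NearestPoint

theorem norm_add_inv_smul_sub_le {F : Type*} [NormedAddCommGroup F] [InnerProductSpace ℝ F]
    {A : F → F} {L : ℝ} (hA : ∀ y z, ‖A y - A z‖ ^ 2 ≤ 2 * L * ⟪z - y, A y - A z⟫) (y z : F) :
    ‖(y + L⁻¹ • A y) - (z + L⁻¹ • A z)‖ ≤ ‖y - z‖ := by
  have hL : L⁻¹ ^ 2 * L = L⁻¹ := by
    rcases eq_or_ne L 0 with rfl | hL
    · simp
    · field_simp
  have hsplit : (y + L⁻¹ • A y) - (z + L⁻¹ • A z) = (y - z) + L⁻¹ • (A y - A z) := by module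
  have hcoco := mul_le_mul_of_nonneg_left (hA y z) (sq_nonneg L⁻¹)
  rw [← neg_sub y z, inner_neg_left] at hcoco
  refine (pow_le_pow_iff_left₀ (norm_nonneg _) (norm_nonneg _) two_ne_zero).1 ?_
  rw [hsplit, norm_add_sq_real, real_inner_smul_right, norm_smul, mul_pow, Real.norm_eq_abs, sq_abs]
  linear_combination hcoco - 2 * ⟪y - z, A y - A z⟫ * hL

section StrongConvexity

variable {E : Type*} [NormedAddCommGroup E] [NormedSpace ℝ E] {s : Set E} {m : ℝ} {h : E → ℝ}

theorem StrongConvexOn.add_sq_norm_sub_le_of_isMinOn (hh : StrongConvexOn s m h) {a u : E}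
    (ha : a ∈ s) (hmin : IsMinOn h s a) (hu : u ∈ s) : h a + m / 4 * ‖a - u‖ ^ 2 ≤ h u := by
  have hhalf : (0 : ℝ) ≤ 1 / 2 := by norm_num
  have hsum : (1 / 2 : ℝ) + 1 / 2 = 1 := by norm_num
  have hmid := hh.2 ha hu hhalf hhalf hsum
  have hle := isMinOn_iff.1 hmin _ (hh.1 ha hu hhalf hhalf hsum)
  simp only [smul_eq_mul] at hmid
  linarith

end StrongConvexity

section Lagrangian

variable {E F : Type*} [NormedAddCommGroup E] [InnerProductSpace ℝ E]
  [NormedAddCommGroup F] [InnerProductSpace ℝ F] {U : Set E} {σ : ℝ} {f : E → ℝ}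

def lagrangian (f : E → ℝ) (G : E →L[ℝ] F) (g : F) (u : E) (x : F) : ℝ :=
  f u + ⟪x, -(G u) - g⟫

theorem StrongConvexOn.lagrangian (hf : StrongConvexOn U σ f) (G : E →L[ℝ] F) (g x : F) :
    StrongConvexOn U σ (lagrangian f G g · x) := by
  refine ⟨hf.1, fun u hu v hv a b ha hb hab => ?_⟩
  have hlin : -(G (a • u + b • v)) - g = a • (-(G u) - g) + b • (-(G v) - g) := by
    rw [map_add, map_smul, map_smul]
    linear_combination (norm := module) hab • g
  have := hf.2 hu hv ha hb hab
  simp only [_root_.lagrangian, hlin, inner_add_right, real_inner_smul_right, smul_eq_mul] at this ⊢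
  linarith

theorem sq_norm_sub_le_of_isMinOn_lagrangian (hf : StrongConvexOn U σ f) (hσ : 0 < σ)
    (G : E →L[ℝ] F) (g : F) {y z : F} {uy uz : E}
    (hy : uy ∈ U) (hymin : IsMinOn (lagrangian f G g · y) U uy)
    (hz : uz ∈ U) (hzmin : IsMinOn (lagrangian f G g · z) U uz) :
    ‖(-(G uy) - g) - (-(G uz) - g)‖ ^ 2
      ≤ 2 * (‖G‖ ^ 2 / σ) * ⟪z - y, (-(G uy) - g) - (-(G uz) - g)⟫ := by
  have hmono : σ / 2 * ‖uy - uz‖ ^ 2 ≤ ⟪z - y, (-(G uy) - g) - (-(G uz) - g)⟫ := by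
    have hgy := (hf.lagrangian G g y).add_sq_norm_sub_le_of_isMinOn hy hymin hz
    have hgz := (hf.lagrangian G g z).add_sq_norm_sub_le_of_isMinOn hz hzmin hy
    rw [norm_sub_rev] at hgz
    simp only [lagrangian, inner_sub_left, inner_sub_right] at hgy hgz ⊢
    linarith
  have hlip : ‖(-(G uy) - g) - (-(G uz) - g)‖ ≤ ‖G‖ * ‖uy - uz‖ := by
    calc ‖(-(G uy) - g) - (-(G uz) - g)‖ = ‖G (uz - uy)‖ := by rw [map_sub]; congr 1; abel
      _ ≤ ‖G‖ * ‖uz - uy‖ := G.le_opNorm _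
      _ = ‖G‖ * ‖uy - uz‖ := by rw [norm_sub_rev]
  calc ‖(-(G uy) - g) - (-(G uz) - g)‖ ^ 2 ≤ (‖G‖ * ‖uy - uz‖) ^ 2 :=
        pow_le_pow_left₀ (norm_nonneg _) hlip 2
    _ = 2 * (‖G‖ ^ 2 / σ) * (σ / 2 * ‖uy - uz‖ ^ 2) := by field_simp
    _ ≤ 2 * (‖G‖ ^ 2 / σ) * ⟪z - y, (-(G uy) - g) - (-(G uz) - g)⟫ :=
        mul_le_mul_of_nonneg_left hmono (by positivity)

end Lagrangian

theorem stmt_2_general {n p : ℕ}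
    (f : EuclideanSpace ℝ (Fin n) → ℝ) (σf : ℝ) (hσf : 0 < σf)
    (hfsc : StrongConvexOn Set.univ σf f)
    (U : Set (EuclideanSpace ℝ (Fin n))) (hUcv : Convex ℝ U)
    (G : EuclideanSpace ℝ (Fin n) →L[ℝ] EuclideanSpace ℝ (Fin p)) (g : EuclideanSpace ℝ (Fin p))
    (K : Set (EuclideanSpace ℝ (Fin p)))
    (Kstar : Set (EuclideanSpace ℝ (Fin p)))
    (hKstar : Kstar = {x : EuclideanSpace ℝ (Fin p) | ∀ v ∈ K, 0 ≤ ⟪x, v⟫})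
    (Lag : EuclideanSpace ℝ (Fin n) → EuclideanSpace ℝ (Fin p) → ℝ)
    (hLag : ∀ u x, Lag u x = f u + ⟪x, -(G u) - g⟫)
    (uu : EuclideanSpace ℝ (Fin p) → EuclideanSpace ℝ (Fin n))
    (huu : ∀ x : EuclideanSpace ℝ (Fin p), uu x ∈ U ∧ ∀ u ∈ U, Lag (uu x) x ≤ Lag u x)
    (Ld : ℝ) (hLd : Ld = ‖G‖ ^ 2 / σf)
    (projKs : EuclideanSpace ℝ (Fin p) → EuclideanSpace ℝ (Fin p))
    (hprojKs : ∀ z : EuclideanSpace ℝ (Fin p), projKs z ∈ Kstar ∧ ∀ w ∈ Kstar, ‖z - projKs z‖ ≤ ‖z - w‖)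
    (gmap : EuclideanSpace ℝ (Fin p) → EuclideanSpace ℝ (Fin p))
    (hgmap : ∀ z : EuclideanSpace ℝ (Fin p), gmap z = projKs (z + (1 / Ld) • (-(G (uu z)) - g)) - z)
 :
    ∀ x ∈ Kstar,
      ‖gmap (projKs (x + (1 / Ld) • (-(G (uu x)) - g)))‖ ≤ ‖gmap x‖ := by
  obtain rfl : Lag = lagrangian f G g := funext fun u => funext fun x => hLag u x
  have hfU : StrongConvexOn U σf f := ⟨hUcv, fun _ _ _ _ => hfsc.2 trivial trivial⟩
  have hcoco (y z : EuclideanSpace ℝ (Fin p)) :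
      ‖(-(G (uu y)) - g) - (-(G (uu z)) - g)‖ ^ 2
        ≤ 2 * Ld * ⟪z - y, (-(G (uu y)) - g) - (-(G (uu z)) - g)⟫ :=
    hLd ▸ sq_norm_sub_le_of_isMinOn_lagrangian hfU hσf G g (huu y).1 (isMinOn_iff.2 (huu y).2)
      (huu z).1 (isMinOn_iff.2 (huu z).2)
  have hKstar_convex : Convex ℝ Kstar := hKstar ▸ convex_setOf_forall_inner_nonneg K
  have hT (y z : EuclideanSpace ℝ (Fin p)) :
      ‖projKs (y + (1 / Ld) • (-(G (uu y)) - g)) - projKs (z + (1 / Ld) • (-(G (uu z)) - g))‖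
        ≤ ‖y - z‖ := by
    rw [one_div]
    exact (norm_sub_le_of_forall_norm_sub_le hKstar_convex hprojKs _ _).trans
      (norm_add_inv_smul_sub_le hcoco y z)
  intro x _
  rw [hgmap, hgmap]
  exact hT _ x

theorem stmt_2 {n p : ℕ}
    (f : EuclideanSpace ℝ (Fin n) → ℝ) (σf : ℝ) (hσf : 0 < σf)
    (hfc : Continuous f) (hfsc : StrongConvexOn Set.univ σf f)
    (U : Set (EuclideanSpace ℝ (Fin n))) (hUne : U.Nonempty) (hUcl : IsClosed U) (hUcv : Convex ℝ U)
    (G : EuclideanSpace ℝ (Fin n) →L[ℝ] EuclideanSpace ℝ (Fin p)) (hG : G ≠ 0) (g : EuclideanSpace ℝ (Fin p))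
    (K : Set (EuclideanSpace ℝ (Fin p))) (hKne : K.Nonempty) (hKcl : IsClosed K) (hKcv : Convex ℝ K)
    (hKcone : ∀ c : ℝ, 0 ≤ c → ∀ v ∈ K, c • v ∈ K)
    (Kstar : Set (EuclideanSpace ℝ (Fin p)))
    (hKstar : Kstar = {x : EuclideanSpace ℝ (Fin p) | ∀ v ∈ K, 0 ≤ ⟪x, v⟫})
    (Lag : EuclideanSpace ℝ (Fin n) → EuclideanSpace ℝ (Fin p) → ℝ)
    (hLag : ∀ u x, Lag u x = f u + ⟪x, -(G u) - g⟫)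
    (uu : EuclideanSpace ℝ (Fin p) → EuclideanSpace ℝ (Fin n))
    (huu : ∀ x : EuclideanSpace ℝ (Fin p), uu x ∈ U ∧ ∀ u ∈ U, Lag (uu x) x ≤ Lag u x)
    (d : EuclideanSpace ℝ (Fin p) → ℝ) (hd : ∀ x, d x = Lag (uu x) x)
    (ustar : EuclideanSpace ℝ (Fin n))
    (hustar : ustar ∈ U ∧ G ustar + g ∈ K ∧ ∀ u ∈ U, G u + g ∈ K → f ustar ≤ f u)
    (fstar : ℝ) (hfstar : fstar = f ustar)
    (Xstar : Set (EuclideanSpace ℝ (Fin p))) (hXstar : Xstar = {x ∈ Kstar | d x = fstar})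
    (hXne : Xstar.Nonempty)
    (Ld : ℝ) (hLd : Ld = ‖G‖ ^ 2 / σf)
    (projKs : EuclideanSpace ℝ (Fin p) → EuclideanSpace ℝ (Fin p))
    (hprojKs : ∀ z : EuclideanSpace ℝ (Fin p), projKs z ∈ Kstar ∧ ∀ w ∈ Kstar, ‖z - projKs z‖ ≤ ‖z - w‖)
    (gmap : EuclideanSpace ℝ (Fin p) → EuclideanSpace ℝ (Fin p))
    (hgmap : ∀ z : EuclideanSpace ℝ (Fin p), gmap z = projKs (z + (1 / Ld) • (-(G (uu z)) - g)) - z)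
 :
    ∀ x ∈ Kstar,
      ‖gmap (projKs (x + (1 / Ld) • (-(G (uu x)) - g)))‖ ≤ ‖gmap x‖ :=
  stmt_2_general f σf hσf hfsc U hUcv G g K Kstar hKstar Lag hLag uu huu Ld hLd projKs hprojKs gmap
    hgmap
end

section
/- For every x ∈ K*, dist_K(−∇d(x)) ≤ L_d·‖∇⁺d(x)‖; in particular, since ∇d(x) = −G u(x) − g, the primal infeasibility satisfies dist_K(G u(x) + g) ≤ L_d·‖x⁺ − x‖. -/
/-!
Let `z = x + ∇d(x) / L_d` and `x⁺ = [z]_{K*}`. The residual of the projection onto the cone `K*`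
makes a nonpositive inner product with every element of `K*`, so by the bipolar theorem
`x⁺ - z ∈ K** = K`. Since `-∇d(x) = L_d (x - z)`, the point `L_d (x⁺ - z)` of `K` lies at distance
`L_d ‖x - x⁺‖` from `-∇d(x)`.
-/

open scoped RealInnerProductSpace
open Metric ProperCone

variable {E : Type*} [NormedAddCommGroup E] [InnerProductSpace ℝ E]

lemma exists_properCone_coe_eq {K : Set E} (hne : K.Nonempty) (hcl : IsClosed K)
    (hcv : Convex ℝ K) (hcone : ∀ c : ℝ, 0 ≤ c → ∀ v ∈ K, c • v ∈ K) :
    ∃ C : ProperCone ℝ E, (C : Set E) = K := by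
  let C : ConvexCone ℝ E :=
    { carrier := K
      smul_mem' := fun c hc v hv => hcone c hc.le v hv
      add_mem' := fun u hu v hv => by
        simpa [smul_add, smul_smul] using
          hcone 2 zero_le_two _ (hcv hu hv one_half_pos.le one_half_pos.le (add_halves 1)) }
  have hC : C.Pointed := by
    obtain ⟨v, hv⟩ := hne
    change (0 : E) ∈ K
    simpa using hcone 0 le_rfl v hv
  exact ⟨⟨C.toPointedCone hC, hcl⟩, rfl⟩

lemma PointedCone.inner_le_zero_of_forall_norm_sub_le {C : PointedCone ℝ E} {z q : E}
    (hq : q ∈ C) (hmin : ∀ w ∈ C, ‖z - q‖ ≤ ‖z - w‖) {w : E} (hw : w ∈ C) :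
    ⟪z - q, w⟫ ≤ 0 := by
  have : Nonempty C := ⟨⟨q, hq⟩⟩
  have hinf : ‖z - q‖ = ⨅ w : C, ‖z - w‖ :=
    le_antisymm (le_ciInf fun w => hmin w w.2)
      (ciInf_le (f := fun w : C => ‖z - w‖) ⟨0, Set.forall_mem_range.2 fun _ => norm_nonneg _⟩
        ⟨q, hq⟩)
  simpa using (norm_eq_iInf_iff_real_inner_le_zero C.convex hq).mp hinf (q + w) (C.add_mem hq hw)

variable [CompleteSpace E]

lemma ProperCone.sub_mem_of_forall_norm_sub_le {C : ProperCone ℝ E} {z q : E}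
    (hq : q ∈ innerDual (C : Set E)) (hmin : ∀ w ∈ innerDual (C : Set E), ‖z - q‖ ≤ ‖z - w‖) :
    q - z ∈ C := by
  rw [← innerDual_innerDual C, mem_innerDual]
  intro w hw
  have hpolar := PointedCone.inner_le_zero_of_forall_norm_sub_le
    (C := (innerDual (C : Set E) : PointedCone ℝ E)) hq hmin hw
  rw [real_inner_comm, ← neg_sub, inner_neg_left]
  linarith

lemma ProperCone.infDist_smul_sub_le {C : ProperCone ℝ E} {L : ℝ} (hL : 0 ≤ L) {z q : E}
    (hq : q ∈ innerDual (C : Set E)) (hmin : ∀ w ∈ innerDual (C : Set E), ‖z - q‖ ≤ ‖z - w‖)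
    (x : E) : infDist (L • (x - z)) C ≤ L * ‖q - x‖ :=
  calc infDist (L • (x - z)) C ≤ dist (L • (x - z)) (L • (q - z)) :=
        infDist_le_dist_of_mem (C.smul_mem (sub_mem_of_forall_norm_sub_le hq hmin) hL)
    _ = L * ‖q - x‖ := by
        rw [dist_smul₀, Real.norm_of_nonneg hL, dist_sub_right, dist_eq_norm']

theorem stmt_3_general {n p : ℕ}
    (σf : ℝ) (hσf : 0 < σf)
    (G : EuclideanSpace ℝ (Fin n) →L[ℝ] EuclideanSpace ℝ (Fin p)) (hG : G ≠ 0) (g : EuclideanSpace ℝ (Fin p))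
    (K : Set (EuclideanSpace ℝ (Fin p))) (hKne : K.Nonempty) (hKcl : IsClosed K) (hKcv : Convex ℝ K)
    (hKcone : ∀ c : ℝ, 0 ≤ c → ∀ v ∈ K, c • v ∈ K)
    (Kstar : Set (EuclideanSpace ℝ (Fin p)))
    (hKstar : Kstar = {x : EuclideanSpace ℝ (Fin p) | ∀ v ∈ K, 0 ≤ ⟪x, v⟫})
    (uu : EuclideanSpace ℝ (Fin p) → EuclideanSpace ℝ (Fin n))
    (Ld : ℝ) (hLd : Ld = ‖G‖ ^ 2 / σf)
    (projKs : EuclideanSpace ℝ (Fin p) → EuclideanSpace ℝ (Fin p))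
    (hprojKs : ∀ z : EuclideanSpace ℝ (Fin p), projKs z ∈ Kstar ∧ ∀ w ∈ Kstar, ‖z - projKs z‖ ≤ ‖z - w‖)
    (gmap : EuclideanSpace ℝ (Fin p) → EuclideanSpace ℝ (Fin p))
    (hgmap : ∀ z : EuclideanSpace ℝ (Fin p), gmap z = projKs (z + (1 / Ld) • (-(G (uu z)) - g)) - z)
 :
    ∀ x ∈ Kstar,
      Metric.infDist (-(-(G (uu x)) - g)) K ≤ Ld * ‖gmap x‖ ∧
      Metric.infDist (G (uu x) + g) K ≤
        Ld * ‖projKs (x + (1 / Ld) • (-(G (uu x)) - g)) - x‖ := by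
  intro x _
  have hLd_pos : 0 < Ld := hLd ▸ div_pos (pow_pos (norm_pos_iff.mpr hG) 2) hσf
  obtain ⟨C, rfl⟩ := exists_properCone_coe_eq hKne hKcl hKcv hKcone
  have hKstar_eq :
      Kstar = (innerDual (C : Set (EuclideanSpace ℝ (Fin p))) : Set (EuclideanSpace ℝ (Fin p))) := by
    ext w
    simp [hKstar, real_inner_comm]
  subst hKstar_eq
  set y := -(G (uu x)) - g
  have hgrad : -y = Ld • (x - (x + (1 / Ld) • y)) := by
    rw [sub_add_cancel_left, smul_neg, smul_smul, mul_one_div_cancel hLd_pos.ne', one_smul]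
  have key := infDist_smul_sub_le hLd_pos.le (hprojKs (x + (1 / Ld) • y)).1 (hprojKs _).2 x
  rw [← hgrad] at key
  exact ⟨hgmap x ▸ key, by rwa [show G (uu x) + g = -y by simp only [y]; abel]⟩

theorem stmt_3 {n p : ℕ}
    (f : EuclideanSpace ℝ (Fin n) → ℝ) (σf : ℝ) (hσf : 0 < σf)
    (hfc : Continuous f) (hfsc : StrongConvexOn Set.univ σf f)
    (U : Set (EuclideanSpace ℝ (Fin n))) (hUne : U.Nonempty) (hUcl : IsClosed U) (hUcv : Convex ℝ U)
    (G : EuclideanSpace ℝ (Fin n) →L[ℝ] EuclideanSpace ℝ (Fin p)) (hG : G ≠ 0) (g : EuclideanSpace ℝ (Fin p))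
    (K : Set (EuclideanSpace ℝ (Fin p))) (hKne : K.Nonempty) (hKcl : IsClosed K) (hKcv : Convex ℝ K)
    (hKcone : ∀ c : ℝ, 0 ≤ c → ∀ v ∈ K, c • v ∈ K)
    (Kstar : Set (EuclideanSpace ℝ (Fin p)))
    (hKstar : Kstar = {x : EuclideanSpace ℝ (Fin p) | ∀ v ∈ K, 0 ≤ ⟪x, v⟫})
    (Lag : EuclideanSpace ℝ (Fin n) → EuclideanSpace ℝ (Fin p) → ℝ)
    (hLag : ∀ u x, Lag u x = f u + ⟪x, -(G u) - g⟫)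
    (uu : EuclideanSpace ℝ (Fin p) → EuclideanSpace ℝ (Fin n))
    (huu : ∀ x : EuclideanSpace ℝ (Fin p), uu x ∈ U ∧ ∀ u ∈ U, Lag (uu x) x ≤ Lag u x)
    (d : EuclideanSpace ℝ (Fin p) → ℝ) (hd : ∀ x, d x = Lag (uu x) x)
    (Ld : ℝ) (hLd : Ld = ‖G‖ ^ 2 / σf)
    (projKs : EuclideanSpace ℝ (Fin p) → EuclideanSpace ℝ (Fin p))
    (hprojKs : ∀ z : EuclideanSpace ℝ (Fin p), projKs z ∈ Kstar ∧ ∀ w ∈ Kstar, ‖z - projKs z‖ ≤ ‖z - w‖)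
    (gmap : EuclideanSpace ℝ (Fin p) → EuclideanSpace ℝ (Fin p))
    (hgmap : ∀ z : EuclideanSpace ℝ (Fin p), gmap z = projKs (z + (1 / Ld) • (-(G (uu z)) - g)) - z)
 :
    ∀ x ∈ Kstar,
      Metric.infDist (-(-(G (uu x)) - g)) K ≤ Ld * ‖gmap x‖ ∧
      Metric.infDist (G (uu x) + g) K ≤
        Ld * ‖projKs (x + (1 / Ld) • (-(G (uu x)) - g)) - x‖ :=
  stmt_3_general σf hσf G hG g K hKne hKcl hKcv hKcone Kstar hKstar uu Ld hLd projKs hprojKs gmap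
    hgmap
end

section
/- For the sequences generated by Algorithm (DFG), for every x ∈ K* and k ≥ 0: θ_{k+1}² (d(x) − d(x^{k+1})) + Σ_{i=1}^{k+1} θ_i Δ(x, y^i) + (L_d/2) ‖w^{k+1} − x‖² ≤ (L_d/2) ‖x^0 − x‖², where Δ(x, y) = d(y) + ⟨∇d(y), x − y⟩ − d(x) and w^k = x^{k−1} + θ_k (x^k − x^{k−1}). -/
open scoped RealInnerProductSpace

lemma lim_helper {c r M : ℝ} (h : ∀ t : ℝ, 0 < t → t ≤ 1 → c ≤ r + t * M) : c ≤ r := by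
  rcases le_or_gt M 0 with hM | hM
  · have := h 1 one_pos le_rfl; linarith
  · refine le_of_forall_pos_le_add fun ε hε => ?_
    rcases le_or_gt (ε / M) 1 with h1 | h1
    · have := h (ε / M) (div_pos hε hM) h1
      rw [div_mul_cancel₀ _ (ne_of_gt hM)] at this; linarith
    · have h2 := h 1 one_pos le_rfl
      have h3 : M < ε := by rwa [lt_div_iff₀ hM, one_mul] at h1
      linarith

section helpers
variable {E : Type*} [NormedAddCommGroup E] [InnerProductSpace ℝ E]

lemma nsq (s t : ℝ) (u v : E) :
    ‖s • u - t • v‖ ^ 2 = s ^ 2 * ‖u‖ ^ 2 - 2 * s * t * ⟪u, v⟫ + t ^ 2 * ‖v‖ ^ 2 := by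
  rw [norm_sub_sq_real, norm_smul, norm_smul, real_inner_smul_left, real_inner_smul_right,
    mul_pow, mul_pow, Real.norm_eq_abs, Real.norm_eq_abs, sq_abs, sq_abs]
  ring

lemma key_norm_id (θ : ℝ) (a b Y z : E) :
    θ * (‖z - Y‖ ^ 2 - ‖z - b‖ ^ 2 + (θ - 1) * (‖a - Y‖ ^ 2 - ‖a - b‖ ^ 2))
      = ‖(θ • Y - (θ - 1) • a) - z‖ ^ 2 - ‖(a + θ • (b - a)) - z‖ ^ 2 := by
  have h1 : (θ • Y - (θ - 1) • a) - z = θ • (Y - z) - (θ - 1) • (a - z) := by module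
  have h2 : (a + θ • (b - a)) - z = θ • (b - z) - (θ - 1) • (a - z) := by module
  have h3 : z - Y = (1 : ℝ) • (z - Y) - (0 : ℝ) • (a - z) := by module
  have h4 : z - b = (1 : ℝ) • (z - b) - (0 : ℝ) • (a - z) := by module
  have h5 : a - Y = (1 : ℝ) • (a - z) - (1 : ℝ) • (Y - z) := by module
  have h6 : a - b = (1 : ℝ) • (a - z) - (1 : ℝ) • (b - z) := by module
  rw [h1, h2, h3, h4, h5, h6, nsq, nsq, nsq, nsq, nsq, nsq,
    norm_sub_rev z Y, norm_sub_rev z b,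
    real_inner_comm (a - z) (Y - z), real_inner_comm (a - z) (b - z)]
  ring

end helpers
set_option maxHeartbeats 2000000 in
theorem stmt_8 {n p : ℕ}
    (f : EuclideanSpace ℝ (Fin n) → ℝ) (σf : ℝ) (hσf : 0 < σf)
    (hfc : Continuous f) (hfsc : StrongConvexOn Set.univ σf f)
    (U : Set (EuclideanSpace ℝ (Fin n))) (hUne : U.Nonempty) (hUcl : IsClosed U) (hUcv : Convex ℝ U)
    (G : EuclideanSpace ℝ (Fin n) →L[ℝ] EuclideanSpace ℝ (Fin p)) (hG : G ≠ 0) (g : EuclideanSpace ℝ (Fin p))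
    (K : Set (EuclideanSpace ℝ (Fin p))) (hKne : K.Nonempty) (hKcl : IsClosed K) (hKcv : Convex ℝ K)
    (hKcone : ∀ c : ℝ, 0 ≤ c → ∀ v ∈ K, c • v ∈ K)
    (Kstar : Set (EuclideanSpace ℝ (Fin p)))
    (hKstar : Kstar = {x : EuclideanSpace ℝ (Fin p) | ∀ v ∈ K, 0 ≤ ⟪x, v⟫})
    (Lag : EuclideanSpace ℝ (Fin n) → EuclideanSpace ℝ (Fin p) → ℝ)
    (hLag : ∀ u x, Lag u x = f u + ⟪x, -(G u) - g⟫)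
    (uu : EuclideanSpace ℝ (Fin p) → EuclideanSpace ℝ (Fin n))
    (huu : ∀ x : EuclideanSpace ℝ (Fin p), uu x ∈ U ∧ ∀ u ∈ U, Lag (uu x) x ≤ Lag u x)
    (d : EuclideanSpace ℝ (Fin p) → ℝ) (hd : ∀ x, d x = Lag (uu x) x)
    (ustar : EuclideanSpace ℝ (Fin n))
    (hustar : ustar ∈ U ∧ G ustar + g ∈ K ∧ ∀ u ∈ U, G u + g ∈ K → f ustar ≤ f u)
    (fstar : ℝ) (hfstar : fstar = f ustar)
    (Xstar : Set (EuclideanSpace ℝ (Fin p))) (hXstar : Xstar = {x ∈ Kstar | d x = fstar})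
    (hXne : Xstar.Nonempty)
    (Ld : ℝ) (hLd : Ld = ‖G‖ ^ 2 / σf)
    (projKs : EuclideanSpace ℝ (Fin p) → EuclideanSpace ℝ (Fin p))
    (hprojKs : ∀ z : EuclideanSpace ℝ (Fin p), projKs z ∈ Kstar ∧ ∀ w ∈ Kstar, ‖z - projKs z‖ ≤ ‖z - w‖)
    (θ : ℕ → ℝ) (hθ0 : θ 0 = 0) (hθ1 : θ 1 = 1)
    (hθrec : ∀ k, 1 ≤ k → θ (k + 1) = (1 + Real.sqrt (1 + 4 * θ k ^ 2)) / 2)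
    (x y : ℕ → EuclideanSpace ℝ (Fin p)) (hx0K : x 0 ∈ Kstar) (hy1 : y 1 = x 0)
    (hxrec : ∀ k, 1 ≤ k → x k = projKs (y k + (1 / Ld) • (-(G (uu (y k))) - g)))
    (hyrec : ∀ k, 1 ≤ k →
      y (k + 1) = x k + ((θ k - 1) / θ (k + 1)) • (x k - x (k - 1)))
    (w : ℕ → EuclideanSpace ℝ (Fin p)) (hw0 : w 0 = x 0)
    (hwrec : ∀ k, w (k + 1) = x k + θ (k + 1) • (x (k + 1) - x k))
    (Δ : EuclideanSpace ℝ (Fin p) → EuclideanSpace ℝ (Fin p) → ℝ)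
    (hΔ : ∀ z v, Δ z v = d v + ⟪-(G (uu v)) - g, z - v⟫ - d z)
 :
    ∀ z ∈ Kstar, ∀ k : ℕ,
      θ (k + 1) ^ 2 * (d z - d (x (k + 1))) +
          (∑ i ∈ Finset.Icc 1 (k + 1), θ i * Δ z (y i)) +
          Ld / 2 * ‖w (k + 1) - z‖ ^ 2 ≤
        Ld / 2 * ‖x 0 - z‖ ^ 2 := by
  intro z hz
  have hGpos : 0 < ‖G‖ := norm_pos_iff.2 hG
  have hLdpos : 0 < Ld := by rw [hLd]; exact div_pos (pow_pos hGpos 2) hσf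
  -- Kstar is convex
  have hKsCv : Convex ℝ Kstar := by
    rw [hKstar]
    intro x1 h1 x2 h2 a b ha hb hab
    intro v hv
    simp only [Set.mem_setOf_eq] at h1 h2 ⊢
    rw [inner_add_left, real_inner_smul_left, real_inner_smul_left]
    exact add_nonneg (mul_nonneg ha (h1 v hv)) (mul_nonneg hb (h2 v hv))
  -- quadratic growth at the minimizer
  have hqg : ∀ (xx : EuclideanSpace ℝ (Fin p)) (v : EuclideanSpace ℝ (Fin n)), v ∈ U →
      Lag (uu xx) xx + σf / 2 * ‖v - uu xx‖ ^ 2 ≤ Lag v xx := by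
    intro xx v hv
    have hcn : (0:ℝ) ≤ σf / 2 * ‖v - uu xx‖ ^ 2 := by positivity
    have key : ∀ t : ℝ, 0 < t → t ≤ 1 →
        Lag (uu xx) xx + σf / 2 * ‖v - uu xx‖ ^ 2 ≤
          Lag v xx + t * (σf / 2 * ‖v - uu xx‖ ^ 2) := by
      intro t ht ht1
      have ha : (0:ℝ) ≤ 1 - t := by linarith
      have hb : (0:ℝ) ≤ t := le_of_lt ht
      have hab : (1 - t) + t = 1 := by ring
      have hf1 := hfsc.2 (Set.mem_univ (uu xx)) (Set.mem_univ v) ha hb hab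
      simp only [smul_eq_mul] at hf1
      have hmem : (1 - t) • uu xx + t • v ∈ U := hUcv (huu xx).1 hv ha hb hab
      have hmin := (huu xx).2 _ hmem
      have hlin : Lag ((1 - t) • uu xx + t • v) xx
          = f ((1 - t) • uu xx + t • v)
            + ((1 - t) * ⟪xx, -(G (uu xx)) - g⟫ + t * ⟪xx, -(G v) - g⟫) := by
        rw [hLag]
        congr 1
        have hG2 : -(G ((1 - t) • uu xx + t • v)) - g
            = (1 - t) • (-(G (uu xx)) - g) + t • (-(G v) - g) := by
          rw [map_add, map_smul, map_smul]
          module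
        rw [hG2, inner_add_right, real_inner_smul_right, real_inner_smul_right]
      have hnrev : ‖uu xx - v‖ = ‖v - uu xx‖ := norm_sub_rev _ _
      rw [hnrev] at hf1
      rw [hlin] at hmin
      have hcomb : Lag (uu xx) xx ≤ (1 - t) * Lag (uu xx) xx + t * Lag v xx
          - (1 - t) * t * (σf / 2 * ‖v - uu xx‖ ^ 2) := by
        rw [hLag (uu xx) xx, hLag v xx]
        rw [hLag (uu xx) xx] at hmin
        linarith [hmin, hf1]
      nlinarith [hcomb, ht, hcn]
    have := lim_helper key
    linarith
  -- concavity upper bound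
  have hconc : ∀ z' v : EuclideanSpace ℝ (Fin p),
      d z' ≤ d v + ⟪-(G (uu v)) - g, z' - v⟫ := by
    intro z' v
    have h1 : d z' ≤ Lag (uu v) z' := by
      rw [hd]; exact (huu z').2 _ (huu v).1
    rw [hLag] at h1
    have h3 : d v = f (uu v) + ⟪v, -(G (uu v)) - g⟫ := by rw [hd, hLag]
    have h2 : ⟪-(G (uu v)) - g, z' - v⟫ = ⟪z', -(G (uu v)) - g⟫ - ⟪v, -(G (uu v)) - g⟫ := by
      rw [real_inner_comm, inner_sub_left]
    linarith
  have hΔnn : ∀ z' v : EuclideanSpace ℝ (Fin p), 0 ≤ Δ z' v := by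
    intro z' v; rw [hΔ]; linarith [hconc z' v]
  -- descent lemma
  have hdescent : ∀ X Y : EuclideanSpace ℝ (Fin p),
      d Y + ⟪-(G (uu Y)) - g, X - Y⟫ - Ld / 2 * ‖X - Y‖ ^ 2 ≤ d X := by
    intro X Y
    have h1 := hqg Y (uu X) (huu X).1
    have h2 : Lag (uu X) X = Lag (uu X) Y + ⟪X - Y, -(G (uu X)) - g⟫ := by
      rw [hLag, hLag, inner_sub_left]; ring
    have h3 : ⟪X - Y, -(G (uu X)) - g⟫
        = ⟪X - Y, -(G (uu Y)) - g⟫ + ⟪X - Y, G (uu Y) - G (uu X)⟫ := by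
      rw [← inner_add_right]
      congr 1
      module
    have h4 : |⟪X - Y, G (uu Y) - G (uu X)⟫| ≤ ‖X - Y‖ * (‖G‖ * ‖uu X - uu Y‖) := by
      calc |⟪X - Y, G (uu Y) - G (uu X)⟫| ≤ ‖X - Y‖ * ‖G (uu Y) - G (uu X)‖ :=
            abs_real_inner_le_norm _ _
        _ = ‖X - Y‖ * ‖G (uu Y - uu X)‖ := by rw [map_sub]
        _ ≤ ‖X - Y‖ * (‖G‖ * ‖uu Y - uu X‖) :=
            mul_le_mul_of_nonneg_left (G.le_opNorm _) (norm_nonneg _)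
        _ = ‖X - Y‖ * (‖G‖ * ‖uu X - uu Y‖) := by rw [norm_sub_rev (uu Y) (uu X)]
    have h5 : σf / 2 * ‖uu X - uu Y‖ ^ 2 - ‖X - Y‖ * (‖G‖ * ‖uu X - uu Y‖)
        + Ld / 2 * ‖X - Y‖ ^ 2 ≥ 0 := by
      have hL : σf * Ld = ‖G‖ ^ 2 := by rw [hLd]; field_simp
      nlinarith [sq_nonneg (σf * ‖uu X - uu Y‖ - ‖G‖ * ‖X - Y‖), hσf, hL,
        sq_nonneg (‖X - Y‖), sq_nonneg (‖uu X - uu Y‖)]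
    have h6 : ⟪X - Y, -(G (uu Y)) - g⟫ = ⟪-(G (uu Y)) - g, X - Y⟫ := real_inner_comm _ _
    have h7 : d X = Lag (uu X) X := hd X
    have h8 : d Y = Lag (uu Y) Y := hd Y
    have habs : -(‖X - Y‖ * (‖G‖ * ‖uu X - uu Y‖)) ≤ ⟪X - Y, G (uu Y) - G (uu X)⟫ :=
      neg_le_of_abs_le h4 |>.trans_eq rfl
    linarith [h1, habs]
  -- projection variational inequality
  have hVI : ∀ zz w' : EuclideanSpace ℝ (Fin p), w' ∈ Kstar →
      ⟪zz - projKs zz, w' - projKs zz⟫ ≤ 0 := by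
    intro zz w' hw'
    have key : ∀ t : ℝ, 0 < t → t ≤ 1 →
        ⟪zz - projKs zz, w' - projKs zz⟫ ≤ 0 + t * (‖w' - projKs zz‖ ^ 2 / 2) := by
      intro t ht ht1
      have hmem : (1 - t) • projKs zz + t • w' ∈ Kstar :=
        hKsCv (hprojKs zz).1 hw' (by linarith) ht.le (by ring)
      have hle := (hprojKs zz).2 _ hmem
      have hsq : ‖zz - projKs zz‖ ^ 2 ≤ ‖zz - ((1 - t) • projKs zz + t • w')‖ ^ 2 :=
        pow_le_pow_left₀ (norm_nonneg _) hle 2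
      have hrw : zz - ((1 - t) • projKs zz + t • w')
          = (1 : ℝ) • (zz - projKs zz) - t • (w' - projKs zz) := by module
      rw [hrw, nsq] at hsq
      nlinarith [hsq, ht, sq_nonneg (‖w' - projKs zz‖)]
    linarith [lim_helper key]
  have hxK : ∀ k : ℕ, x k ∈ Kstar := by
    intro k
    cases k with
    | zero => exact hx0K
    | succ k => rw [hxrec (k + 1) (by omega)]; exact (hprojKs _).1
  -- key per-iteration inequality
  have hstar : ∀ s : ℕ, 1 ≤ s → ∀ z' ∈ Kstar,
      d z' - d (x s) + Δ z' (y s) ≤ Ld / 2 * (‖z' - y s‖ ^ 2 - ‖z' - x s‖ ^ 2) := by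
    intro s hs z' hz'
    have hX : x s = projKs (y s + (1 / Ld) • (-(G (uu (y s))) - g)) := hxrec s hs
    have hdes := hdescent (x s) (y s)
    have hvi := hVI (y s + (1 / Ld) • (-(G (uu (y s))) - g)) z' hz'
    rw [← hX] at hvi
    have hvi2 : ⟪-(G (uu (y s))) - g, z' - x s⟫ ≤ Ld * ⟪x s - y s, z' - x s⟫ := by
      have hexp : y s + (1 / Ld) • (-(G (uu (y s))) - g) - x s
          = (1 / Ld) • (-(G (uu (y s))) - g) - (x s - y s) := by module
      rw [hexp, inner_sub_left, real_inner_smul_left] at hvi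
      have h9 := mul_le_mul_of_nonneg_left hvi (le_of_lt hLdpos)
      rw [mul_sub] at h9
      have hcancel : Ld * (1 / Ld * ⟪-(G (uu (y s))) - g, z' - x s⟫)
          = ⟪-(G (uu (y s))) - g, z' - x s⟫ := by
        field_simp
      rw [hcancel] at h9
      linarith
    have hΔeq := hΔ z' (y s)
    have hsplit : ⟪-(G (uu (y s))) - g, z' - y s⟫
        = ⟪-(G (uu (y s))) - g, z' - x s⟫ + ⟪-(G (uu (y s))) - g, x s - y s⟫ := by
      rw [← inner_add_right]; congr 1; abel
    have hni : ‖z' - y s‖ ^ 2 = ‖z' - x s‖ ^ 2 + 2 * ⟪z' - x s, x s - y s⟫ + ‖x s - y s‖ ^ 2 := by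
      have h10 : z' - y s = (z' - x s) + (x s - y s) := by abel
      rw [h10, norm_add_sq_real]
    have hcomm : ⟪z' - x s, x s - y s⟫ = ⟪x s - y s, z' - x s⟫ := real_inner_comm _ _
    have hre : Ld / 2 * (‖z' - y s‖ ^ 2 - ‖z' - x s‖ ^ 2)
        = Ld * ⟪x s - y s, z' - x s⟫ + Ld / 2 * ‖x s - y s‖ ^ 2 := by
      rw [hni, hcomm]; ring
    have hcomm2 : ⟪-(G (uu (y s))) - g, x s - y s⟫ = ⟪-(G (uu (y s))) - g, x s - y s⟫ := rfl
    rw [hre]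
    linarith [hdes, hvi2, hΔeq, hsplit]
  -- theta facts
  have hθpos : ∀ k : ℕ, 1 ≤ k → 1 ≤ θ k := by
    intro k hk
    induction k, hk using Nat.le_induction with
    | base => rw [hθ1]
    | succ n hn ih =>
      rw [hθrec n hn]
      have h1 : (1:ℝ) ≤ Real.sqrt (1 + 4 * θ n ^ 2) := by
        have h2 := Real.sqrt_le_sqrt (show (1:ℝ) ≤ 1 + 4 * θ n ^ 2 by nlinarith [sq_nonneg (θ n)])
        rwa [Real.sqrt_one] at h2
      linarith
  have hθsq : ∀ s : ℕ, 1 ≤ s → θ s ^ 2 - θ s = θ (s - 1) ^ 2 := by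
    intro s hs
    match s, hs with
    | 1, _ => simp [hθ1, hθ0]
    | (k+2), _ =>
      rw [hθrec (k+1) (by omega)]
      have h0 : (0:ℝ) ≤ 1 + 4 * θ (k+1) ^ 2 := by positivity
      have hr := Real.sq_sqrt h0
      have : ((1 + Real.sqrt (1 + 4 * θ (k+1) ^ 2)) / 2) ^ 2
          - (1 + Real.sqrt (1 + 4 * θ (k+1) ^ 2)) / 2
          = (Real.sqrt (1 + 4 * θ (k+1) ^ 2) ^ 2 - 1) / 4 := by ring
      rw [this, hr]
      show (1 + 4 * θ (k+1) ^ 2 - 1) / 4 = θ (k+1) ^ 2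
      ring
  -- theta-y-w identity
  have hwid : ∀ s : ℕ, 1 ≤ s → θ s • y s = w (s - 1) + (θ s - 1) • x (s - 1) := by
    intro s hs
    match s, hs with
    | 1, _ =>
      rw [hθ1, hy1, hw0]
      simp
    | (k+2), _ =>
      have hk1 : 1 ≤ k + 1 := by omega
      have h1 : y (k+2) = x (k+1) + ((θ (k+1) - 1) / θ (k+2)) • (x (k+1) - x k) :=
        hyrec (k+1) hk1
      have hw' : w (k+1) = x k + θ (k+1) • (x (k+1) - x k) := hwrec k
      have hθne : θ (k+2) ≠ 0 := by
        have := hθpos (k+2) (by omega); linarith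
      show θ (k+2) • y (k+2) = w (k+1) + (θ (k+2) - 1) • x (k+1)
      rw [h1, hw']
      rw [smul_add, smul_smul]
      have hcanc : θ (k+2) * ((θ (k+1) - 1) / θ (k+2)) = θ (k+1) - 1 := by
        field_simp
      rw [hcanc]
      module
  -- per-step inequality
  have hstep : ∀ s : ℕ, 1 ≤ s →
      θ s ^ 2 * (d z - d (x s)) - θ (s - 1) ^ 2 * (d z - d (x (s - 1)))
        + θ s * Δ z (y s)
        + Ld / 2 * ‖w s - z‖ ^ 2 - Ld / 2 * ‖w (s - 1) - z‖ ^ 2 ≤ 0 := by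
    intro s hs
    have hA := hstar s hs z hz
    have hB := hstar s hs (x (s-1)) (hxK (s-1))
    have hBn : d (x (s-1)) - d (x s)
        ≤ Ld / 2 * (‖x (s-1) - y s‖ ^ 2 - ‖x (s-1) - x s‖ ^ 2) := by
      have := hΔnn (x (s-1)) (y s); linarith
    have hθ1s := hθpos s hs
    have hC := mul_le_mul_of_nonneg_left hBn (by linarith : (0:ℝ) ≤ θ s - 1)
    have hid := key_norm_id (θ s) (x (s-1)) (x s) (y s) z
    have hw1 : θ s • y s - (θ s - 1) • x (s-1) = w (s-1) := by
      rw [hwid s hs]; module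
    have hw2 : x (s-1) + θ s • (x s - x (s-1)) = w s := by
      have := hwrec (s-1)
      rw [show s - 1 + 1 = s from by omega] at this
      exact this.symm
    rw [hw1, hw2] at hid
    have hsq := hθsq s hs
    have hA2 := mul_le_mul_of_nonneg_left hA (by linarith : (0:ℝ) ≤ θ s)
    have hC2 := mul_le_mul_of_nonneg_left hC (by linarith : (0:ℝ) ≤ θ s)
    have hid2 : Ld / 2 * (θ s * (‖z - y s‖ ^ 2 - ‖z - x s‖ ^ 2
          + (θ s - 1) * (‖x (s-1) - y s‖ ^ 2 - ‖x (s-1) - x s‖ ^ 2)))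
        = Ld / 2 * (‖w (s-1) - z‖ ^ 2 - ‖w s - z‖ ^ 2) := by rw [hid]
    have hsq' : θ (s-1) ^ 2 * (d z - d (x (s-1)))
        = (θ s ^ 2 - θ s) * (d z - d (x (s-1))) := by rw [hsq]
    rw [hsq']
    nlinarith [hA2, hC2, hid2]
  -- final induction
  intro k
  induction k with
  | zero =>
    have h := hstep 1 le_rfl
    rw [hθ0, hw0] at h
    rw [Finset.Icc_self, Finset.sum_singleton]
    norm_num at h ⊢
    linarith
  | succ k ih =>
    have h := hstep (k + 1 + 1) (by omega)
    simp only [Nat.add_sub_cancel] at h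
    rw [Finset.sum_Icc_succ_top (by omega : 1 ≤ k + 1 + 1)]
    linarith [ih, h]
end
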